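/- Data-processing inequality for the hockey-stick divergence under positive trace-preserving maps: if T* : L(H) → L(K) is trace-preserving and positive and the adjoint T is unital, then for all t ≥ 0, E_t(T*ρ ‖ T*σ) ≤ E_t(ρ ‖ σ), where E_t(ρ‖σ) = tr((ρ - tσ)⁺) - max(1-t, 0). -/

import Mathlib

open Matrix ComplexOrder

lemma continuousOn_of_finite {f : ℝ → ℝ} {s : Set ℝ} (hs : s.Finite) : ContinuousOn f s := by
  rw [continuousOn_iff_continuous_restrict]
  have : Finite s := hs
  have : DiscreteTopology s := Finite.instDiscreteTopology
  exact continuous_of_discreteTopology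

lemma contOn_spec {k : ℕ} (f : ℝ → ℝ) (A : Matrix (Fin k) (Fin k) ℂ) :
    ContinuousOn f (spectrum ℝ A) := continuousOn_of_finite A.finite_real_spectrum

lemma cfc_posSemidef {k : ℕ} {A : Matrix (Fin k) (Fin k) ℂ} (hA : A.IsHermitian)
    {f : ℝ → ℝ} (hf : ∀ x, 0 ≤ f x) : (cfc f A).PosSemidef := by
  rw [hA.cfc_eq]
  unfold Matrix.IsHermitian.cfc
  have hD : (Matrix.diagonal (RCLike.ofReal ∘ f ∘ hA.eigenvalues) :
      Matrix (Fin k) (Fin k) ℂ).PosSemidef :=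
    Matrix.PosSemidef.diagonal (fun i => by
      simpa using (RCLike.ofReal_nonneg (K := ℂ)).mpr (hf _))
  simpa [Matrix.star_eq_conjTranspose] using
    hD.mul_mul_conjTranspose_same (hA.eigenvectorUnitary : Matrix (Fin k) (Fin k) ℂ)

lemma psd_trace_nonneg {k : ℕ} {M : Matrix (Fin k) (Fin k) ℂ} (hM : M.PosSemidef) :
    0 ≤ M.trace := by
  rw [Matrix.trace]
  apply Finset.sum_nonneg
  intro i _
  exact hM.diag_nonneg

open scoped MatrixOrder in
lemma psd_trace_mul_nonneg {k : ℕ} {X Y : Matrix (Fin k) (Fin k) ℂ}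
    (hX : X.PosSemidef) (hY : Y.PosSemidef) : 0 ≤ (X * Y).trace := by
  classical
  have h1 : X = CFC.sqrt X * CFC.sqrt X := (CFC.sqrt_mul_sqrt_self X hX.nonneg).symm
  have hS : (CFC.sqrt X).IsHermitian :=
    (Matrix.nonneg_iff_posSemidef.mp (CFC.sqrt_nonneg X)).isHermitian
  have : (X * Y).trace = (CFC.sqrt X * Y * (CFC.sqrt X)ᴴ).trace := by
    rw [hS.eq]
    conv_lhs => rw [h1]
    rw [mul_assoc, Matrix.trace_mul_comm, mul_assoc]
  rw [this]
  exact psd_trace_nonneg (hY.mul_mul_conjTranspose_same _)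

noncomputable def hockeyStick {n : ℕ}
    (ρ σ : Matrix (Fin n) (Fin n) ℂ) (t : ℝ) : ℝ :=
  (cfc (fun x : ℝ => max x 0) (ρ - (t : ℂ) • σ)).trace.re - max (1 - t) 0

/-- Data-processing inequality for the hockey-stick divergence under
positive trace-preserving maps. -/
theorem hockeyStick_data_processing {n m : ℕ}
    (ρ σ : Matrix (Fin n) (Fin n) ℂ)
    (hρ : ρ.PosSemidef) (hρtr : ρ.trace = 1)
    (hσ : σ.PosSemidef) (hσtr : σ.trace = 1)
    (T : Matrix (Fin n) (Fin n) ℂ →ₗ[ℂ] Matrix (Fin m) (Fin m) ℂ)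
    (hpos : ∀ a : Matrix (Fin n) (Fin n) ℂ, a.PosSemidef → (T a).PosSemidef)
    (htrace : ∀ a : Matrix (Fin n) (Fin n) ℂ, (T a).trace = a.trace) :
    ∀ t : ℝ, 0 ≤ t → hockeyStick (T ρ) (T σ) t ≤ hockeyStick ρ σ t := by
  intro t ht
  classical
  set f : ℝ → ℝ := fun x => max x 0 with hf
  set A : Matrix (Fin n) (Fin n) ℂ := ρ - (t : ℂ) • σ with hAdef
  have hstar : star (t : ℂ) = (t : ℂ) := by simp [Complex.star_def, Complex.conj_ofReal]
  have hρsa : IsSelfAdjoint ρ := hρ.1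
  have hσsa : IsSelfAdjoint σ := hσ.1
  have hAsa : IsSelfAdjoint A := hρsa.sub (IsSelfAdjoint.smul hstar hσsa)
  have hAh : A.IsHermitian := hAsa
  -- B = T A
  have hTB : T ρ - (t : ℂ) • T σ = T A := by rw [hAdef, map_sub, _root_.map_smul]
  set B : Matrix (Fin m) (Fin m) ℂ := T A with hBdef
  -- positive/negative parts of A
  have hfnn : ∀ x : ℝ, 0 ≤ f x := fun x => le_max_right x 0
  have hApos : (cfc f A).PosSemidef := cfc_posSemidef hAh hfnn
  have hAneg : (cfc (fun x : ℝ => max (-x) 0) A).PosSemidef :=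
    cfc_posSemidef hAh (fun x => le_max_right _ 0)
  have hAsplit : A = cfc f A - cfc (fun x : ℝ => max (-x) 0) A := by
    rw [← cfc_sub (a := A) f (fun x : ℝ => max (-x) 0) (contOn_spec _ _) (contOn_spec _ _)]
    have : (fun x : ℝ => f x - max (-x) 0) = fun x : ℝ => x := by
      funext x
      rcases le_total x 0 with h | h
      · simp [hf, max_eq_right h, max_eq_left (neg_nonneg.mpr h)]
      · simp [hf, max_eq_left h, max_eq_right (neg_nonpos.mpr h)]
    rw [this, cfc_id' ℝ A]
  have hBsa : IsSelfAdjoint B := by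
    have : B = T (cfc f A) - T (cfc (fun x : ℝ => max (-x) 0) A) := by
      rw [hBdef]; conv_lhs => rw [hAsplit]
      rw [map_sub]
    rw [this]
    exact IsSelfAdjoint.sub (hpos _ hApos).1 (hpos _ hAneg).1
  have hBh : B.IsHermitian := hBsa
  -- projection P
  set g : ℝ → ℝ := fun x => if 0 < x then 1 else 0 with hg
  set P : Matrix (Fin m) (Fin m) ℂ := cfc g B with hP
  have hPpsd : P.PosSemidef := cfc_posSemidef hBh (fun x => by by_cases h : 0 < x <;> simp [hg, h])
  have hQpsd : (1 - P).PosSemidef := by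
    have : (1 : Matrix (Fin m) (Fin m) ℂ) - P = cfc (fun x : ℝ => 1 - g x) B := by
      rw [cfc_sub (a := B) (fun _ => (1:ℝ)) g (contOn_spec _ _) (contOn_spec _ _),
        cfc_const_one ℝ B]
    rw [this]
    exact cfc_posSemidef hBh (fun x => by by_cases h : 0 < x <;> simp [hg, h])
  have hBP : cfc f B = B * P := by
    have h1 : f = fun x : ℝ => x * g x := by
      funext x
      rcases lt_or_ge 0 x with h | h
      · simp [hf, hg, h, max_eq_left h.le]
      · simp [hf, hg, not_lt.mpr h, max_eq_right h]
    rw [h1, cfc_mul (a := B) _ _ (contOn_spec _ _) (contOn_spec _ _), cfc_id' ℝ B]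
  -- A ≤ (A)₊ transported by T
  have hdiff : (cfc f A - A).PosSemidef := by
    have : cfc f A - A = cfc (fun x : ℝ => f x - x) A := by
      rw [cfc_sub (a := A) f (fun x => x) (contOn_spec _ _) (contOn_spec _ _), cfc_id' ℝ A]
    rw [this]
    exact cfc_posSemidef hAh (fun x => by simp [hf, sub_nonneg, le_max_left])
  set C : Matrix (Fin m) (Fin m) ℂ := T (cfc f A) with hC
  have hCpsd : C.PosSemidef := hpos _ hApos
  have hCB : (C - B).PosSemidef := by
    have : C - B = T (cfc f A - A) := by rw [map_sub]
    rw [this]; exact hpos _ hdiff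
  -- trace chain
  have step1 : (B * P).trace.re ≤ (C * P).trace.re := by
    have h0 : 0 ≤ ((C - B) * P).trace := psd_trace_mul_nonneg hCB hPpsd
    rw [sub_mul, trace_sub] at h0
    have := (Complex.le_def.mp h0).1
    simp only [Complex.zero_re, Complex.sub_re] at this
    linarith
  have step2 : (C * P).trace.re ≤ C.trace.re := by
    have h0 : 0 ≤ (C * (1 - P)).trace := psd_trace_mul_nonneg hCpsd hQpsd
    rw [mul_sub, mul_one, trace_sub] at h0
    have := (Complex.le_def.mp h0).1
    simp only [Complex.zero_re, Complex.sub_re] at this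
    linarith
  have hCtr : C.trace = (cfc f A).trace := htrace _
  have key : (cfc f B).trace.re ≤ (cfc f A).trace.re := by
    rw [hBP]
    calc (B * P).trace.re ≤ (C * P).trace.re := step1
      _ ≤ C.trace.re := step2
      _ = (cfc f A).trace.re := by rw [hCtr]
  unfold hockeyStick
  rw [hTB]
  exact sub_le_sub_right key _
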